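/- arXiv:1701.07009 — 3 statements merged into one kernel-verified Lean document; each statement's English description precedes it below -/
import Mathlib

section
/- The joint distribution of the pair of statistics (returns(D), n − ldr(D)) over Dyck paths of semilength n is symmetric: the number of Dyck paths D of semilength n with returns(D) = a and n − ldr(D) = b equals the number with returns(D) = b and n − ldr(D) = a. -/
/-!
Dyck paths are encoded as lists of booleans: `true` is a north step `(0,1)`,
`false` is an east step `(1,0)`.  A Dyck path of semilength `n` goes from
`(0,0)` to `(n,n)` staying weakly above the diagonal `y = x`.
-/

/-- `D` is a Dyck word: every prefix has at least as many north steps as east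
steps, and the total numbers agree. -/
def isDyck (D : List Bool) : Bool :=
  ((List.range (D.length + 1)).all fun k =>
    (D.take k).count false ≤ (D.take k).count true) &&
  (D.count true == D.count false)

/-- The (finite) set of Dyck paths of semilength `n`. -/
def dyckPaths (n : ℕ) : Finset (List Bool) :=
  ((List.replicate n true ++ List.replicate n false).permutations.filter isDyck).toFinset

/-- The number of returns: east steps ending on the diagonal `y = x`. -/
def returns (D : List Bool) : ℕ :=
  ((List.range D.length).filter fun i =>
    (D[i]? == some false) &&
    ((D.take (i + 1)).count true == (D.take (i + 1)).count false)).length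

/-- `ldr D`: the `y`-coordinate of the midpoint of the last double rise
(last pair of consecutive north steps), `0` if there is no double rise. -/
def ldr (D : List Bool) : ℕ :=
  match ((List.range D.length).filter fun i =>
      (D[i]? == some true) && (D[i+1]? == some true)).getLast? with
  | some i => (D.take (i + 1)).count true
  | none => 0

/-- The set of `x`-coordinates (plus 1) of the north steps of `D`. -/
def rises (D : List Bool) : Finset ℕ :=
  (((List.range D.length).filter fun i => D[i]? == some true).map
    fun i => (D.take i).count false + 1).toFinset

/-- The multiset of `x`-coordinates (plus 1) of the north steps of `D`. -/
def risesM (D : List Bool) : Multiset ℕ :=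
  ↑(((List.range D.length).filter fun i => D[i]? == some true).map
    fun i => (D.take i).count false + 1)

/-- `D` ends with a single east step: its last maximal run of east steps has
length one, i.e. `D` ends with a north step followed by one east step. -/
def EndsSingleEast (D : List Bool) : Prop :=
  ∃ P, D = P ++ [true, false]

/-- `R` contains only single rises: no two consecutive north steps. -/
def SingleRises (R : List Bool) : Prop :=
  ∀ i, ¬ (R[i]? = some true ∧ R[i+1]? = some true)

/-- A prime Dyck path: a Dyck path whose only return is its final east step. -/
def IsPrimeDyck (Q : List Bool) : Prop :=
  isDyck Q = true ∧ Q ≠ [] ∧ returns Q = 1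

/-- Concatenation `n₀ Q₁ n₁ Q₂ ⋯` of runs of north steps and paths, encoded as a
list of pairs `(nᵢ₋₁, Qᵢ)`. -/
def primeBlocks (l : List (ℕ × List Bool)) : List Bool :=
  (l.map fun p => List.replicate p.1 true ++ p.2).flatten

/-!
Cutting a Dyck path `P` before the north step that opens its last prime component gives
`P = B N A E` with Dyck paths `A` and `B`; iterating, Dyck paths of semilength `n` correspond to
binary trees with `n` nodes, `a △ b` standing for `B N A E` when `a`, `b` stand for `A`, `B`.
The returns of `P` are the nodes on the right spine of its tree. If `A` is empty the last double
rise of `P` is that of `B`, and otherwise it lies in `N A`; so `n - ldr P` is the number of right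
steps on the path from the root that goes left whenever it can.

Nonempty trees are in bijection with pairs `(c, b)` through a map `merge` such that the left-greedy
path of `merge c b` has one more right step than the right spine of `b` has nodes. Replacing
`merge c d △ b` by `merge c b △ d` (and recursing below `nil △ b`) is therefore a size-preserving
involution exchanging the two statistics.
-/

namespace BinaryTree

def rightSpineLength : BinaryTree Unit → ℕ
  | nil => 0
  | node () _ b => b.rightSpineLength + 1

def leftGreedyRightSteps : BinaryTree Unit → ℕ
  | nil => 0
  | node () nil b => b.leftGreedyRightSteps + 1
  | node () (node () x y) _ => (x △ y).leftGreedyRightSteps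

def merge : BinaryTree Unit → BinaryTree Unit → BinaryTree Unit
  | nil, nil => nil △ nil
  | nil, node () c b => nil △ merge c b
  | node () c d, b => merge c b △ d

def unmerge : BinaryTree Unit → BinaryTree Unit × BinaryTree Unit
  | nil => (nil, nil)
  | node () nil nil => (nil, nil)
  | node () nil (node () x y) => (nil, (unmerge (x △ y)).1 △ (unmerge (x △ y)).2)
  | node () (node () x y) b => ((unmerge (x △ y)).1 △ b, (unmerge (x △ y)).2)

def swapSpines : BinaryTree Unit → BinaryTree Unit
  | nil => nil
  | node () nil b => nil △ b.swapSpines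
  | node () (node () x y) b => merge (unmerge (x △ y)).1 b △ (unmerge (x △ y)).2

theorem merge_ne_nil (c b : BinaryTree Unit) : merge c b ≠ nil := by
  fun_cases merge c b <;> simp

theorem leftGreedyRightSteps_node_of_ne_nil {a : BinaryTree Unit} (b : BinaryTree Unit)
    (ha : a ≠ nil) : (a △ b).leftGreedyRightSteps = a.leftGreedyRightSteps := by
  cases a
  · contradiction
  · rfl

theorem unmerge_nil_node {b : BinaryTree Unit} (hb : b ≠ nil) :
    unmerge (nil △ b) = (nil, (unmerge b).1 △ (unmerge b).2) := by
  cases b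
  · contradiction
  · rfl

theorem unmerge_node_of_ne_nil {a : BinaryTree Unit} (b : BinaryTree Unit) (ha : a ≠ nil) :
    unmerge (a △ b) = ((unmerge a).1 △ b, (unmerge a).2) := by
  cases a
  · contradiction
  · rfl

theorem swapSpines_node_of_ne_nil {a : BinaryTree Unit} (b : BinaryTree Unit) (ha : a ≠ nil) :
    swapSpines (a △ b) = merge (unmerge a).1 b △ (unmerge a).2 := by
  cases a
  · contradiction
  · rfl

theorem unmerge_merge (c b : BinaryTree Unit) : unmerge (merge c b) = (c, b) := by
  fun_induction merge c b with
  | case1 => rfl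
  | case2 c b ih => rw [unmerge_nil_node (merge_ne_nil c b), ih]
  | case3 c d b ih => rw [unmerge_node_of_ne_nil _ (merge_ne_nil c b), ih]

theorem merge_unmerge {a : BinaryTree Unit} (ha : a ≠ nil) :
    merge (unmerge a).1 (unmerge a).2 = a := by
  fun_induction unmerge a <;> simp_all [merge]

theorem numNodes_merge (c b : BinaryTree Unit) :
    (merge c b).numNodes = c.numNodes + b.numNodes + 1 := by
  fun_induction merge c b <;> simp only [numNodes, *]
  omega

theorem leftGreedyRightSteps_merge (c b : BinaryTree Unit) :
    (merge c b).leftGreedyRightSteps = b.rightSpineLength + 1 := by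
  fun_induction merge c b with
  | case1 => rfl
  | case2 c b ih => simp [leftGreedyRightSteps, rightSpineLength, ih]
  | case3 c d b ih => rw [leftGreedyRightSteps_node_of_ne_nil _ (merge_ne_nil c b), ih]

theorem numNodes_unmerge {a : BinaryTree Unit} (ha : a ≠ nil) :
    (unmerge a).1.numNodes + (unmerge a).2.numNodes + 1 = a.numNodes := by
  conv_rhs => rw [← merge_unmerge ha, numNodes_merge]

theorem rightSpineLength_unmerge {a : BinaryTree Unit} (ha : a ≠ nil) :
    (unmerge a).2.rightSpineLength + 1 = a.leftGreedyRightSteps := by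
  conv_rhs => rw [← merge_unmerge ha, leftGreedyRightSteps_merge]

theorem rightSpineLength_swapSpines (t : BinaryTree Unit) :
    t.swapSpines.rightSpineLength = t.leftGreedyRightSteps := by
  fun_induction swapSpines t with
  | case1 => rfl
  | case2 b ih => simp [rightSpineLength, leftGreedyRightSteps, ih]
  | case3 x y b => rw [rightSpineLength, rightSpineLength_unmerge (by simp), leftGreedyRightSteps]

theorem leftGreedyRightSteps_swapSpines (t : BinaryTree Unit) :
    t.swapSpines.leftGreedyRightSteps = t.rightSpineLength := by
  fun_induction swapSpines t with
  | case1 => rfl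
  | case2 b ih => simp [rightSpineLength, leftGreedyRightSteps, ih]
  | case3 x y b =>
    rw [leftGreedyRightSteps_node_of_ne_nil _ (merge_ne_nil _ _), leftGreedyRightSteps_merge,
      rightSpineLength]

theorem numNodes_swapSpines (t : BinaryTree Unit) : t.swapSpines.numNodes = t.numNodes := by
  fun_induction swapSpines t with
  | case1 => rfl
  | case2 b ih => simp [numNodes, ih]
  | case3 x y b =>
    have := numNodes_unmerge (a := x △ y) (by simp)
    simp only [numNodes, numNodes_merge] at this ⊢
    omega

theorem swapSpines_involutive : Function.Involutive swapSpines := by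
  intro t
  fun_induction swapSpines t with
  | case1 => rfl
  | case2 b ih => simp [swapSpines, ih]
  | case3 x y b =>
    rw [swapSpines_node_of_ne_nil _ (merge_ne_nil _ _), unmerge_merge, merge_unmerge (by simp)]

end BinaryTree

def IsDyckWord (D : List Bool) : Prop :=
  (∀ k, (D.take k).count false ≤ (D.take k).count true) ∧ D.count true = D.count false

theorem isDyck_iff (D : List Bool) : isDyck D = true ↔ IsDyckWord D := by
  simp only [isDyck, Bool.and_eq_true, List.all_eq_true, List.mem_range, decide_eq_true_eq,
    beq_iff_eq, IsDyckWord]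
  refine and_congr_left fun _ => ⟨fun h k => ?_, fun h k _ => h k⟩
  rcases le_or_gt k D.length with hk | hk
  · exact h k (by omega)
  · simpa [List.take_of_length_le hk.le] using h D.length (by omega)

theorem mem_dyckPaths {n : ℕ} {D : List Bool} :
    D ∈ dyckPaths n ↔ IsDyckWord D ∧ D.count true = n := by
  have hcount (x : Bool) : (List.replicate n true ++ List.replicate n false).count x = n := by
    cases x <;> simp [List.count_replicate]
  simp only [dyckPaths, List.mem_toFinset, List.mem_filter, List.mem_permutations, isDyck_iff,
    List.perm_iff_count, hcount, Bool.forall_bool]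
  constructor
  · rintro ⟨⟨-, ht⟩, hD⟩
    exact ⟨hD, ht⟩
  · rintro ⟨hD, ht⟩
    exact ⟨⟨hD.2 ▸ ht, ht⟩, hD⟩

theorem IsDyckWord.append {X Y : List Bool} (hX : IsDyckWord X) (hY : IsDyckWord Y) :
    IsDyckWord (X ++ Y) := by
  refine ⟨fun k => ?_, by simp [hX.2, hY.2]⟩
  simpa [List.take_append] using Nat.add_le_add (hX.1 k) (hY.1 (k - X.length))

theorem IsDyckWord.nest {A : List Bool} (hA : IsDyckWord A) :
    IsDyckWord (true :: (A ++ [false])) := by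
  refine ⟨fun k => ?_, by simp [hA.2]⟩
  cases k with
  | zero => simp
  | succ k =>
    have hprefix := hA.1 k
    have hlast : (List.take (k - A.length) [false]).count false ≤ 1 := by
      cases k - A.length <;> simp
    simp only [List.take_succ_cons, List.take_append, List.count_cons_self, List.count_cons_of_ne,
      List.count_append, ne_eq, Bool.true_eq_false, not_false_eq_true]
    omega

theorem IsDyckWord.head?_eq_some_true {D : List Bool} (hD : IsDyckWord D) (hne : D ≠ []) :
    D.head? = some true := by
  obtain ⟨x, D, rfl⟩ := List.exists_cons_of_ne_nil hne
  cases x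
  · simpa using hD.1 1
  · rfl

theorem returns_append {X : List Bool} (Y : List Bool) (hX : X.count true = X.count false) :
    returns (X ++ Y) = returns X + returns Y := by
  simp only [returns, ← List.countP_eq_length_filter, List.length_append, List.range_add,
    List.countP_append, List.countP_map]
  congr 1
  · refine List.countP_congr fun i hi => ?_
    have hi : i < X.length := List.mem_range.mp hi
    rw [List.getElem?_append_left hi, List.take_append_of_le_length (by omega)]
  · refine List.countP_congr fun j _ => ?_
    rw [Function.comp_apply, List.getElem?_append_right (by omega), Nat.add_sub_cancel_left,
      Nat.add_assoc, List.take_length_add_append]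
    simp [hX]

theorem returns_nest {A : List Bool} (hA : IsDyckWord A) :
    returns (true :: (A ++ [false])) = 1 := by
  simp only [returns, ← List.countP_eq_length_filter, List.length_cons, List.length_append,
    List.range_succ, List.countP_append]
  rw [List.countP_eq_zero.mpr fun i hi => ?_]
  · simp [List.take_of_length_le, hA.2]
  · have hi : i ≤ A.length := by simpa [Nat.lt_succ_iff] using hi
    have hprefix := hA.1 i
    simp only [List.take_succ_cons, List.take_append_of_le_length hi, List.count_cons_self,
      List.count_cons_of_ne, ne_eq, Bool.true_eq_false, not_false_eq_true, Bool.and_eq_true,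
      beq_iff_eq, not_and]
    omega

def doubleRises (D : List Bool) : List ℕ :=
  (List.range D.length).filter fun i => (D[i]? == some true) && (D[i+1]? == some true)

theorem ldr_eq_elim (D : List Bool) :
    ldr D = (doubleRises D).getLast?.elim 0 fun i => (D.take (i + 1)).count true := by
  unfold ldr doubleRises
  cases (List.filter _ _).getLast? <;> rfl

theorem succ_lt_length_of_mem_doubleRises {D : List Bool} {i : ℕ} (hi : i ∈ doubleRises D) :
    i + 1 < D.length := by
  simp only [doubleRises, List.mem_filter, Bool.and_eq_true, beq_iff_eq] at hi
  exact (List.getElem?_eq_some_iff.mp hi.2.2).1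

theorem doubleRises_concat (D : List Bool) (x : Bool) :
    doubleRises (D ++ [x]) =
      doubleRises D ++ if D.getLast? = some true ∧ x = true then [D.length - 1] else [] := by
  rcases List.eq_nil_or_concat D with rfl | ⟨L, y, rfl⟩
  · simp [doubleRises]
  · simp only [List.concat_eq_append, doubleRises, List.length_append, List.length_singleton,
      List.range_succ, List.filter_append]
    have hcongr : (List.range L.length).filter (fun i => ((L ++ [y] ++ [x])[i]? == some true) &&
        ((L ++ [y] ++ [x])[i + 1]? == some true)) = (List.range L.length).filter
          (fun i => ((L ++ [y])[i]? == some true) && ((L ++ [y])[i + 1]? == some true)) :=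
      List.filter_congr fun i hi => by
        have hi : i < L.length := List.mem_range.mp hi
        have h (j : ℕ) (hj : j ≤ L.length) : (L ++ [y] ++ [x])[j]? = (L ++ [y])[j]? :=
          List.getElem?_append_left (by rw [List.length_append, List.length_singleton]; omega)
        rw [h i hi.le, h (i + 1) hi]
    rw [hcongr]
    by_cases hx : x = true <;> by_cases hy : y = true <;> simp [hx, hy]

theorem ldr_concat (D : List Bool) (x : Bool) :
    ldr (D ++ [x]) = if D.getLast? = some true ∧ x = true then D.count true else ldr D := by
  rw [ldr_eq_elim, ldr_eq_elim, doubleRises_concat]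
  split_ifs with h
  · have hD : D ≠ [] := by rintro rfl; simp at h
    have hlen : D.length - 1 + 1 = D.length := Nat.sub_add_cancel (List.length_pos_iff.mpr hD)
    simp [hlen]
  · rw [List.append_nil]
    cases hlast : (doubleRises D).getLast? with
    | none => rfl
    | some i =>
      have hi := succ_lt_length_of_mem_doubleRises (List.mem_of_getLast? hlast)
      simp [List.take_append_of_le_length hi.le]

theorem ldr_append_true_cons (X : List Bool) {Y : List Bool} (hY : Y.head? = some true) :
    ldr (X ++ true :: Y) = X.count true + 1 + ldr Y := by
  induction Y using List.reverseRecOn with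
  | nil => simp at hY
  | append_singleton Y y ih =>
    rcases eq_or_ne Y [] with rfl | hne
    · obtain rfl : y = true := by simpa using hY
      have hldr : ldr [true] = 0 := rfl
      simpa [hldr] using ldr_concat (X ++ [true]) true
    · have hYhead : Y.head? = some true := by rwa [List.head?_append_of_ne_nil _ hne] at hY
      rw [← List.cons_append, ← List.append_assoc, ldr_concat, ldr_concat, ih hYhead]
      have hlast : (X ++ true :: Y).getLast? = Y.getLast? := by
        rw [← List.singleton_append, ← List.append_assoc, List.getLast?_append_of_ne_nil _ hne]
      rw [hlast, List.count_append, List.count_cons_self]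
      split_ifs <;> omega

namespace BinaryTree

def toDyckWord : BinaryTree Unit → List Bool
  | nil => []
  | node () a b => b.toDyckWord ++ true :: (a.toDyckWord ++ [false])

theorem count_toDyckWord (t : BinaryTree Unit) (x : Bool) :
    t.toDyckWord.count x = t.numNodes := by
  induction t with
  | nil => rfl
  | node _ a b iha ihb => cases x <;> simp [toDyckWord, numNodes, iha, ihb] <;> omega

theorem isDyckWord_toDyckWord (t : BinaryTree Unit) : IsDyckWord t.toDyckWord := by
  induction t with
  | nil => exact ⟨fun k => by simp [toDyckWord], rfl⟩
  | node _ a b iha ihb => exact ihb.append iha.nest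

theorem toDyckWord_ne_nil {t : BinaryTree Unit} (ht : t ≠ nil) : t.toDyckWord ≠ [] := by
  cases t
  · contradiction
  · simp [toDyckWord]

theorem getLast?_toDyckWord_ne_some_true (t : BinaryTree Unit) :
    t.toDyckWord.getLast? ≠ some true := by
  cases t with
  | nil => simp [toDyckWord]
  | node _ a b =>
    rw [toDyckWord, ← List.cons_append, ← List.append_assoc, List.getLast?_concat]
    simp

def parseStep : List (BinaryTree Unit) → Bool → List (BinaryTree Unit)
  | s, true => nil :: s
  | c :: a :: s, false => (c △ a) :: s
  | s, false => s

def ofDyckWord (D : List Bool) : BinaryTree Unit :=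
  (D.foldl parseStep [nil]).headD nil

theorem foldl_parseStep_toDyckWord (t : BinaryTree Unit) (s : List (BinaryTree Unit)) :
    t.toDyckWord.foldl parseStep (nil :: s) = t :: s := by
  induction t generalizing s with
  | nil => rfl
  | node _ a b iha ihb => simp [toDyckWord, ihb, parseStep, iha]

theorem ofDyckWord_toDyckWord (t : BinaryTree Unit) : ofDyckWord t.toDyckWord = t := by
  simp [ofDyckWord, foldl_parseStep_toDyckWord]

-- The word read by `parseStep` to reach the stack `[tₖ, …, t₁, t₀]`: the word of `t₀`, then for
-- `i = 1, …, k` a north step followed by the word of `tᵢ`.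
def stackWord : List (BinaryTree Unit) → List Bool
  | [] => []
  | [t] => t.toDyckWord
  | c :: a :: s => stackWord (a :: s) ++ true :: c.toDyckWord

theorem stackWord_node_cons (c a : BinaryTree Unit) (s : List (BinaryTree Unit)) :
    stackWord ((c △ a) :: s) = stackWord (a :: s) ++ true :: (c.toDyckWord ++ [false]) := by
  cases s <;> simp [stackWord, toDyckWord]

theorem stackWord_foldl_parseStep (W : List Bool) (s : List (BinaryTree Unit))
    (hW : ∀ k, (W.take k).count false < (W.take k).count true + s.length) :
    stackWord (W.foldl parseStep s) = stackWord s ++ W ∧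
      (W.foldl parseStep s).length + W.count false = s.length + W.count true := by
  induction W generalizing s with
  | nil => simp
  | cons x W ih =>
    obtain ⟨c, s, rfl⟩ :=
      List.exists_cons_of_ne_nil (List.ne_nil_of_length_pos (by simpa using hW 0))
    cases x with
    | true =>
      have hs := ih (nil :: c :: s) fun k => by
        have := hW (k + 1)
        simp only [List.take_succ_cons, List.count_cons_self, List.count_cons_of_ne, ne_eq,
          Bool.true_eq_false, not_false_eq_true, List.length_cons] at this ⊢
        omega
      have hpush : stackWord (nil :: c :: s) = stackWord (c :: s) ++ [true] := rfl
      simp only [List.foldl_cons, parseStep, hpush, List.append_assoc] at hs ⊢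
      simpa [List.count_cons, Nat.add_right_comm, ← Nat.add_assoc] using hs
    | false =>
      obtain ⟨a, s, rfl⟩ := List.exists_cons_of_ne_nil (l := s) (by
        rintro rfl
        simpa using hW 1)
      have hs := ih ((c △ a) :: s) fun k => by simpa [← Nat.add_assoc] using hW (k + 1)
      simp only [List.foldl_cons, parseStep, stackWord_node_cons] at hs ⊢
      simpa [stackWord, List.count_cons, ← Nat.add_assoc, Nat.add_right_comm _ 1] using hs

theorem toDyckWord_ofDyckWord {D : List Bool} (hD : IsDyckWord D) :
    (ofDyckWord D).toDyckWord = D := by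
  obtain ⟨hword, hlen⟩ := stackWord_foldl_parseStep D [nil] fun k => Nat.lt_succ_of_le (hD.1 k)
  rw [hD.2] at hlen
  obtain ⟨t, ht⟩ := List.length_eq_one_iff.mp (by simpa using hlen)
  simpa [ofDyckWord, ht, stackWord, toDyckWord] using hword


theorem returns_toDyckWord (t : BinaryTree Unit) : returns t.toDyckWord = t.rightSpineLength := by
  induction t with
  | nil => rfl
  | node _ a b _ ihb =>
    rw [toDyckWord, returns_append _ (by rw [count_toDyckWord, count_toDyckWord]),
      returns_nest (isDyckWord_toDyckWord a), ihb, rightSpineLength]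

theorem ldr_toDyckWord_add_leftGreedyRightSteps (t : BinaryTree Unit) :
    ldr t.toDyckWord + t.leftGreedyRightSteps = t.numNodes := by
  fun_induction leftGreedyRightSteps t with
  | case1 => rfl
  | case2 b ih =>
    have hw : (nil △ b).toDyckWord = b.toDyckWord ++ [true] ++ [false] := by simp [toDyckWord]
    rw [hw, ldr_concat, ldr_concat, if_neg (by simp),
      if_neg (by simp [getLast?_toDyckWord_ne_some_true]), numNodes, numNodes]
    omega
  | case3 x y b ih =>
    have hw : ((x △ y) △ b).toDyckWord = b.toDyckWord ++ true :: (x △ y).toDyckWord ++ [false] := by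
      rw [toDyckWord.eq_2]
      simp
    have hhead := (isDyckWord_toDyckWord (x △ y)).head?_eq_some_true (toDyckWord_ne_nil (by simp))
    rw [hw, ldr_concat, if_neg (by simp), ldr_append_true_cons _ hhead, count_toDyckWord]
    simp only [numNodes, Unit.unit] at ih ⊢
    omega

theorem numNodes_sub_ldr_toDyckWord (t : BinaryTree Unit) :
    t.numNodes - ldr t.toDyckWord = t.leftGreedyRightSteps := by
  have := ldr_toDyckWord_add_leftGreedyRightSteps t
  omega

end BinaryTree

open BinaryTree

theorem mem_filter_dyckPaths_iff {n a b : ℕ} {D : List Bool} :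
    D ∈ (dyckPaths n).filter (fun D => returns D = a ∧ n - ldr D = b) ↔
      ∃ t : BinaryTree Unit, t.numNodes = n ∧ t.rightSpineLength = a ∧
        t.leftGreedyRightSteps = b ∧ t.toDyckWord = D := by
  rw [Finset.mem_filter, mem_dyckPaths]
  constructor
  · rintro ⟨⟨hD, rfl⟩, rfl, rfl⟩
    obtain ⟨t, rfl⟩ : ∃ t : BinaryTree Unit, t.toDyckWord = D := ⟨_, toDyckWord_ofDyckWord hD⟩
    exact ⟨t, by simp only [count_toDyckWord, returns_toDyckWord, numNodes_sub_ldr_toDyckWord,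
      and_self]⟩
  · rintro ⟨t, rfl, rfl, rfl, rfl⟩
    exact ⟨⟨isDyckWord_toDyckWord t, count_toDyckWord t true⟩, returns_toDyckWord t,
      numNodes_sub_ldr_toDyckWord t⟩

def dyckSwap (D : List Bool) : List Bool :=
  (ofDyckWord D).swapSpines.toDyckWord

theorem dyckSwap_toDyckWord (t : BinaryTree Unit) :
    dyckSwap t.toDyckWord = t.swapSpines.toDyckWord := by
  rw [dyckSwap, ofDyckWord_toDyckWord]

theorem dyckSwap_mem_filter {n a b : ℕ} {D : List Bool}
    (hD : D ∈ (dyckPaths n).filter (fun D => returns D = a ∧ n - ldr D = b)) :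
    dyckSwap D ∈ (dyckPaths n).filter (fun D => returns D = b ∧ n - ldr D = a) := by
  obtain ⟨t, rfl, rfl, rfl, rfl⟩ := mem_filter_dyckPaths_iff.mp hD
  exact mem_filter_dyckPaths_iff.mpr ⟨t.swapSpines, numNodes_swapSpines t,
    rightSpineLength_swapSpines t, leftGreedyRightSteps_swapSpines t, (dyckSwap_toDyckWord t).symm⟩

theorem dyckSwap_dyckSwap {n a b : ℕ} {D : List Bool}
    (hD : D ∈ (dyckPaths n).filter (fun D => returns D = a ∧ n - ldr D = b)) :
    dyckSwap (dyckSwap D) = D := by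
  obtain ⟨t, -, -, -, rfl⟩ := mem_filter_dyckPaths_iff.mp hD
  rw [dyckSwap_toDyckWord, dyckSwap_toDyckWord, swapSpines_involutive t]

/-- The joint distribution of `(returns D, n - ldr D)` over Dyck paths of
semilength `n` is symmetric. -/
theorem stmt1 (n a b : ℕ) :
    ((dyckPaths n).filter fun D => returns D = a ∧ n - ldr D = b).card =
    ((dyckPaths n).filter fun D => returns D = b ∧ n - ldr D = a).card :=
  Finset.card_nbij' dyckSwap dyckSwap (fun _ => dyckSwap_mem_filter) (fun _ => dyckSwap_mem_filter)
    (fun _ => dyckSwap_dyckSwap) (fun _ => dyckSwap_dyckSwap)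
end

section
/- In case (2) of the map φ, where Q = n_0 Q_1 ⋯ Q_k with all n_1 = ⋯ = n_k = ∅: letting m be the final maximal run of north steps of Q minus one step, and Q' the path Q with n_0 and m erased, the path φ(D) = P m Q' n_0 R is a Dyck path of the same semilength with returns(φ(D)) = returns(D) + 1 and ldr(φ(D)) = ldr(D) + 1. -/
/-!
Write `φ(D) = P · M · Z` with `M = N^{r-1} B N E^s` and `Z = N^{n₀} R`; both factors are prime.
Since `B N^r E^s = Q₁ ⋯ Q_k` is a Dyck path, `B` never dips below its starting level, so the
leading `N^{r-1}` keeps `M` strictly above the diagonal when `r ≥ 2`; when `r = 1`, maximality of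
`R` forces `B = ∅` and `M = N E`. `Z` is the prime path `Q R` with `Q`, which rises by `n₀`,
replaced by `N^{n₀}`. Hence `φ(D)` has the returns of `P` plus two, and `D = P · QR` those of `P`
plus one. The last double rise of `D` ends the run `N^{n₀} B N^r`, as `E^s R` has only single
rises; in `φ(D)` it is where `N^{n₀}` meets the north step beginning `R`, and exactly one more
north step precedes it.
-/

namespace DyckPath

def NonnegPrefixes (L : List Bool) : Prop :=
  ∀ k, (L.take k).count false ≤ (L.take k).count true

lemma count_take_le (L : List Bool) (b : Bool) (k : ℕ) : (L.take k).count b ≤ k :=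
  List.count_le_length.trans (List.length_take_le k L)

@[simp]
lemma count_false_replicate_true (n : ℕ) : (List.replicate n true).count false = 0 := by
  simp [List.count_replicate]

@[simp]
lemma count_true_replicate_false (n : ℕ) : (List.replicate n false).count true = 0 := by
  simp [List.count_replicate]

lemma NonnegPrefixes.of_append {X Y : List Bool} (h : NonnegPrefixes (X ++ Y)) :
    NonnegPrefixes X := by
  intro k
  rcases le_total k X.length with hk | hk
  · simpa [List.take_append_of_le_length hk] using h k
  · simpa [List.take_of_length_le hk] using h X.length

lemma NonnegPrefixes.append {X Y : List Bool} (hX : NonnegPrefixes X)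
    (hXY : X.count false ≤ X.count true) (hY : NonnegPrefixes Y) :
    NonnegPrefixes (X ++ Y) := by
  intro k
  rw [List.take_append, List.count_append, List.count_append]
  rcases le_total k X.length with hk | hk
  · simpa [Nat.sub_eq_zero_of_le hk] using hX k
  · rw [List.take_of_length_le hk]
    linarith [hY (k - X.length)]

lemma isDyck_iff {L : List Bool} :
    isDyck L = true ↔ NonnegPrefixes L ∧ L.count true = L.count false := by
  simp only [isDyck, Bool.and_eq_true, List.all_eq_true, List.mem_range, decide_eq_true_eq,
    beq_iff_eq, Nat.lt_succ_iff, NonnegPrefixes]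
  refine and_congr_left fun _ => ⟨fun h k => ?_, fun h k _ => h k⟩
  rcases le_total k L.length with hk | hk
  · exact h k hk
  · simpa [List.take_of_length_le hk] using h L.length le_rfl

lemma isDyck_append {X Y : List Bool} (hX : isDyck X = true) (hY : isDyck Y = true) :
    isDyck (X ++ Y) = true := by
  rw [isDyck_iff] at *
  refine ⟨hX.1.append hX.2.ge hY.1, ?_⟩
  simp only [List.count_append, hX.2, hY.2]

lemma isDyck_flatten {l : List (List Bool)} (h : ∀ x ∈ l, isDyck x = true) :
    isDyck l.flatten = true := by
  induction l with
  | nil => rfl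
  | cons x l ih =>
    exact isDyck_append (h x (by simp)) (ih fun y hy => h y (by simp [hy]))

lemma isDyck_of_append_left {X Y : List Bool} (hXY : isDyck (X ++ Y) = true)
    (hY : isDyck Y = true) : isDyck X = true := by
  rw [isDyck_iff] at *
  refine ⟨hXY.1.of_append, ?_⟩
  have := hXY.2
  simp only [List.count_append] at this
  omega

lemma isDyck_of_append_right {X Y : List Bool} (hXY : isDyck (X ++ Y) = true)
    (hX : X.count true = X.count false) : isDyck Y = true := by
  obtain ⟨hpref, hbal⟩ := isDyck_iff.1 hXY
  refine isDyck_iff.2 ⟨fun j => ?_, ?_⟩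
  · have := hpref (X.length + j)
    simp only [List.take_append, List.take_of_length_le (Nat.le_add_right _ _),
      Nat.add_sub_cancel_left, List.count_append] at this
    omega
  · simp only [List.count_append] at hbal
    omega

lemma mem_dyckPaths_of_perm {n : ℕ} {D D' : List Bool} (hD : D ∈ dyckPaths n)
    (hperm : D'.Perm D) (hD' : isDyck D' = true) : D' ∈ dyckPaths n := by
  simp only [dyckPaths, List.mem_toFinset, List.mem_filter, List.mem_permutations] at *
  exact ⟨hperm.trans hD.1, hD'⟩

lemma returns_append {X Y : List Bool} (hX : X.count true = X.count false) :
    returns (X ++ Y) = returns X + returns Y := by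
  simp only [returns, List.length_append, List.range_add, List.filter_append, List.filter_map,
    List.length_map]
  congr 2
  · refine List.filter_congr fun i hi => ?_
    rw [List.mem_range] at hi
    rw [List.getElem?_append_left hi, List.take_append_of_le_length (by omega)]
  · refine List.filter_congr fun i _ => ?_
    simp only [Function.comp, List.getElem?_append_right (Nat.le_add_right _ _),
      Nat.add_sub_cancel_left, List.take_append, List.count_append,
      List.take_of_length_le (by omega : X.length ≤ X.length + i + 1),
      show X.length + i + 1 - X.length = i + 1 by omega, hX]
    congr 1
    exact Bool.eq_iff_iff.2 (by simp)

lemma getLast_eq_false {L : List Bool} (hL : isDyck L = true) (hne : L ≠ []) :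
    L.getLast hne = false := by
  obtain ⟨L', b, rfl⟩ := (List.eq_nil_or_concat L).resolve_left hne
  obtain ⟨hpref, hbal⟩ := isDyck_iff.1 hL
  cases b
  · simp
  · have hpre := hpref L'.length
    rw [List.concat_eq_append, List.take_left] at hpre
    rw [List.count_concat_self, List.concat_eq_append, List.count_append,
      List.count_cons_of_ne (by decide), List.count_nil] at hbal
    omega

lemma returns_pos {L : List Bool} (hL : isDyck L = true) (hne : L ≠ []) : 0 < returns L := by
  have hlen : 0 < L.length := List.length_pos_iff.2 hne
  refine List.length_pos_iff.2 (List.ne_nil_of_mem (a := L.length - 1) ?_)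
  have hlast := getLast_eq_false hL hne
  rw [List.getLast_eq_getElem] at hlast
  simp [hlast, Nat.sub_add_cancel hlen, hlen, (isDyck_iff.1 hL).2]

lemma IsPrimeDyck.count_take_lt {L : List Bool} (hL : IsPrimeDyck L) {k : ℕ} (hk : 0 < k)
    (hkl : k < L.length) : (L.take k).count false < (L.take k).count true := by
  obtain ⟨hdyck, hne, hret⟩ := hL
  refine lt_of_le_of_ne ((isDyck_iff.1 hdyck).1 k) fun hk_bal => ?_
  rw [← List.take_append_drop k L] at hdyck hret
  have hY := isDyck_of_append_right hdyck hk_bal.symm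
  have hX := isDyck_of_append_left hdyck hY
  have hXne : L.take k ≠ [] := by simp [hne, hk.ne']
  have hYne : L.drop k ≠ [] := by rw [Ne, List.drop_eq_nil_iff]; omega
  rw [returns_append hk_bal.symm] at hret
  linarith [returns_pos hX hXne, returns_pos hY hYne]

lemma isPrimeDyck_of_count_take_lt {L : List Bool} (hne : L ≠ [])
    (hbal : L.count true = L.count false)
    (hlt : ∀ k, 0 < k → k < L.length → (L.take k).count false < (L.take k).count true) :
    IsPrimeDyck L := by
  have hL : isDyck L = true := by
    refine isDyck_iff.2 ⟨fun k => ?_, hbal⟩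
    rcases Nat.eq_zero_or_pos k with rfl | hk
    · simp
    rcases lt_or_ge k L.length with hkl | hkl
    · exact (hlt k hk hkl).le
    · rw [List.take_of_length_le hkl]
      exact hbal.ge
  refine ⟨hL, hne, ?_⟩
  have hlast := getLast_eq_false hL hne
  rw [List.getLast_eq_getElem] at hlast
  obtain ⟨m, hm⟩ : ∃ m, L.length = m + 1 :=
    ⟨L.length - 1, by have := List.length_pos_iff.2 hne; omega⟩
  rw [returns, hm, List.range_succ, List.filter_append, List.length_append,
    List.filter_eq_nil_iff.2]
  · simp only [hm, Nat.add_sub_cancel] at hlast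
    have hm' : m < L.length := by omega
    simp [List.getElem?_eq_getElem hm', hlast, List.take_of_length_le hm.le, hbal]
  · intro i hi
    have := hlt (i + 1) (by omega) (by rw [List.mem_range] at hi; omega)
    simp only [Bool.and_eq_true, beq_iff_eq, not_and]
    omega

lemma isPrimeDyck_replicate_append {X Y : List Bool} {a : ℕ} (ha : 0 < a)
    (hX : X.count true = X.count false + a) (hXY : IsPrimeDyck (X ++ Y)) :
    IsPrimeDyck (List.replicate a true ++ Y) := by
  have hbal := (isDyck_iff.1 hXY.1).2
  have hXlen : 0 < X.length := by
    have : X.count true ≤ X.length := List.count_le_length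
    omega
  refine isPrimeDyck_of_count_take_lt (by simp [ha.ne']) ?_ fun k hk hkl => ?_
  · simp only [List.count_append, List.count_replicate_self, count_false_replicate_true]
      at hbal ⊢
    omega
  · simp only [List.length_append, List.length_replicate] at hkl
    rcases le_total k a with hka | hka
    · simp only [List.take_append, List.take_replicate, min_eq_left hka, List.length_replicate,
        Nat.sub_eq_zero_of_le hka, List.take_zero, List.append_nil, List.count_replicate_self,
        count_false_replicate_true]
      exact hk
    · have hXY := IsPrimeDyck.count_take_lt hXY (k := X.length + (k - a)) (by omega)
        (by rw [List.length_append]; omega)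
      simp only [List.take_append, List.take_of_length_le (Nat.le_add_right _ _),
        Nat.add_sub_cancel_left, List.count_append] at hXY
      simp only [List.take_append, List.take_replicate, min_eq_right hka, List.length_replicate,
        List.count_append, List.count_replicate_self, count_false_replicate_true]
      omega

lemma isPrimeDyck_replicate_pred_append_true_append {B : List Bool} {r s : ℕ}
    (hC : isDyck (B ++ List.replicate r true ++ List.replicate s false) = true) (hr : 1 ≤ r)
    (hrB : 0 < r - 1 ∨ B = []) :
    IsPrimeDyck (List.replicate (r - 1) true ++ (B ++ [true] ++ List.replicate s false)) := by
  obtain ⟨hCpref, hbal⟩ := isDyck_iff.1 hC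
  have hB : NonnegPrefixes B := NonnegPrefixes.of_append (NonnegPrefixes.of_append hCpref)
  simp only [List.count_append, List.count_replicate_self, count_true_replicate_false,
    count_false_replicate_true] at hbal
  obtain ⟨a, rfl⟩ : ∃ a, r = a + 1 := ⟨r - 1, by omega⟩
  rw [Nat.add_sub_cancel] at hrB ⊢
  replace hrB : 0 < a ∨ B.length = 0 := hrB.imp_right List.length_eq_zero_iff.2
  rw [show B ++ [true] ++ List.replicate s false =
    B ++ (List.replicate 1 true ++ List.replicate s false) by simp]
  refine isPrimeDyck_of_count_take_lt (by simp) ?_ fun k hk hkl => ?_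
  · simp only [List.count_append, List.count_replicate_self, count_false_replicate_true,
      count_true_replicate_false]
    omega
  · simp only [List.length_append, List.length_replicate] at hkl
    have hBk := hB (k - a)
    have hBk_le := count_take_le B false (k - a)
    simp only [List.take_append, List.count_append, List.take_replicate, List.length_replicate,
      List.count_replicate_self, count_false_replicate_true, count_true_replicate_false]
    rcases le_total k (a + B.length) with hk' | hk'
    · omega
    · rw [List.take_of_length_le (by omega)] at hBk ⊢
      omega

lemma primeBlocks_cons (p : ℕ × List Bool) (l : List (ℕ × List Bool)) :
    primeBlocks (p :: l) = List.replicate p.1 true ++ p.2 ++ primeBlocks l := by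
  simp [primeBlocks]

lemma primeBlocks_of_forall_fst_eq_zero {l : List (ℕ × List Bool)} (h : ∀ p ∈ l, p.1 = 0) :
    primeBlocks l = (l.map Prod.snd).flatten := by
  induction l with
  | nil => rfl
  | cons p l ih =>
    rw [primeBlocks_cons, ih fun q hq => h q (by simp [hq]), h p (by simp)]
    simp

lemma isDyck_of_primeBlocks_eq_replicate_append {n0 : ℕ} {Q1 C : List Bool}
    {rest : List (ℕ × List Bool)} (hcase : ∀ p ∈ rest, p.1 = 0) (hQ1 : IsPrimeDyck Q1)
    (hprimes : ∀ p ∈ rest, IsPrimeDyck p.2)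
    (hC : primeBlocks ((n0, Q1) :: rest) = List.replicate n0 true ++ C) :
    isDyck C = true := by
  simp only [primeBlocks_cons, primeBlocks_of_forall_fst_eq_zero hcase, List.append_assoc,
    List.append_cancel_left_eq] at hC
  rw [← hC]
  refine isDyck_append hQ1.1 (isDyck_flatten fun x hx => ?_)
  obtain ⟨p, hp, rfl⟩ := List.mem_map.1 hx
  exact (hprimes p hp).1

lemma SingleRises.false_cons {L : List Bool} (h : SingleRises L) : SingleRises (false :: L)
  | 0, ⟨h0, _⟩ => by simp at h0
  | i + 1, hi => h i (by simpa using hi)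

lemma SingleRises.replicate_false_append {L : List Bool} (h : SingleRises L) (s : ℕ) :
    SingleRises (List.replicate s false ++ L) := by
  induction s with
  | zero => simpa
  | succ s ih => simpa [List.replicate_succ] using SingleRises.false_cons ih

lemma SingleRises.true_cons {L : List Bool} (h : SingleRises L) (hL : L.head? ≠ some true) :
    SingleRises (true :: L)
  | 0, ⟨_, h1⟩ => hL (by simpa [List.head?_eq_getElem?] using h1)
  | i + 1, hi => h i (by simpa using hi)

lemma singleRises_true_cons_replicate_false_append {R : List Bool} (hR : SingleRises R) {s : ℕ}
    (hs : 0 < s) : SingleRises (true :: (List.replicate s false ++ R)) := by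
  refine SingleRises.true_cons (SingleRises.replicate_false_append hR s) ?_
  obtain ⟨s, rfl⟩ := Nat.exists_eq_add_of_lt hs
  simp [List.replicate_succ]

lemma sub_one_pos_or_eq_nil_of_maximal {D P Q R B : List Bool} {n0 r s : ℕ}
    (hmax : ∀ P' Q' R' : List Bool, D = P' ++ Q' ++ R' → SingleRises R' →
      (R' = [] ∨ R'.head? = some true) → Q'.getLast? = some false →
      IsPrimeDyck (Q' ++ R') → R'.length ≤ R.length)
    (hsplit : D = P ++ Q ++ R) (hR : SingleRises R) (hprime : IsPrimeDyck (Q ++ R))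
    (hrun : Q = List.replicate n0 true ++
      (B ++ List.replicate r true ++ List.replicate s false))
    (hB : B.getLast? ≠ some true) (hr : 1 ≤ r) (hs : 1 ≤ s) :
    0 < r - 1 ∨ B = [] := by
  refine (Nat.lt_or_ge 1 r).imp (by omega) fun hr1 => ?_
  obtain rfl : r = 1 := by omega
  by_contra hBne
  have hBlast : B.getLast? = some false := by
    cases h : B.getLast? with
    | none => exact absurd (List.getLast?_eq_none_iff.1 h) hBne
    | some b => cases b <;> simp_all
  -- `P, N^{n₀} B, N E^s R` is a decomposition with a longer final part
  have hlonger := hmax P (List.replicate n0 true ++ B) (true :: (List.replicate s false ++ R))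
    (by simp [hsplit, hrun]) (singleRises_true_cons_replicate_false_append hR hs) (Or.inr rfl)
    (by simp [List.getLast?_append, hBlast]) (by simpa [hrun] using hprime)
  simp at hlonger

lemma getLast?_filter_range_eq_some {p : ℕ → Bool} {m n : ℕ} (hmn : m < n) (hm : p m = true)
    (hgt : ∀ j, m < j → j < n → p j = false) :
    ((List.range n).filter p).getLast? = some m := by
  have htail : ((List.range (n - (m + 1))).map (m + 1 + ·)).filter p = [] := by
    refine List.filter_eq_nil_iff.2 ?_
    simp only [List.mem_map, List.mem_range]
    rintro _ ⟨j, hj, rfl⟩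
    simp [hgt (m + 1 + j) (by omega) (by omega)]
  rw [show n = (m + 1) + (n - (m + 1)) by omega, List.range_add, List.filter_append, htail,
    List.append_nil, List.range_succ, List.filter_append, List.filter_singleton, hm, cond_true,
    List.getLast?_concat]

lemma getLast?_append_replicate (X : List Bool) {n : ℕ} (b : Bool) (hn : 0 < n) :
    (X ++ List.replicate n b).getLast? = some b := by
  simp [List.getLast?_append, List.getLast?_replicate, hn.ne']

lemma ldr_append_true_cons {X Y : List Bool} (hX : X.getLast? = some true)
    (hY : SingleRises (true :: Y)) : ldr (X ++ true :: Y) = X.count true := by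
  obtain ⟨X, rfl⟩ := List.getLast?_eq_some_iff.1 hX
  unfold ldr
  rw [getLast?_filter_range_eq_some (m := X.length) (by simp)]
  · simp [List.take_append, List.take_of_length_le (Nat.le_succ X.length)]
  · simp
  · intro j hj _
    obtain ⟨t, rfl⟩ : ∃ t, j = X.length + (t + 1) := ⟨j - (X.length + 1), by omega⟩
    simpa [List.getElem?_append_right, Nat.add_assoc] using hY t

lemma ldr_append_replicate_append_replicate {P B R : List Bool} {a r s : ℕ} (hR : SingleRises R)
    (ha : 0 < a) (hr : 1 ≤ r) (hs : 1 ≤ s) (hrB : 0 < r - 1 ∨ B = []) :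
    ldr (P ++ (List.replicate a true ++ (B ++ List.replicate r true ++ List.replicate s false)) ++
      R) = P.count true + a + B.count true + (r - 1) := by
  have hlast : (P ++ List.replicate a true ++ B ++ List.replicate (r - 1) true).getLast? =
      some true := by
    rcases hrB with h | rfl
    · exact getLast?_append_replicate _ true h
    · simpa [List.replicate_append_replicate] using
        getLast?_append_replicate P true (by omega : 0 < a + (r - 1))
  rw [show P ++ (List.replicate a true ++ (B ++ List.replicate r true ++
      List.replicate s false)) ++ R = (P ++ List.replicate a true ++ B ++
      List.replicate (r - 1) true) ++ true :: (List.replicate s false ++ R) by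
    rw [← Nat.sub_add_cancel hr]; simp [List.replicate_succ'],
    ldr_append_true_cons hlast (singleRises_true_cons_replicate_false_append hR hs)]
  simp only [List.count_append, List.count_replicate_self]

lemma ldr_append_replicate_append_true_cons {X R : List Bool} {a : ℕ} (ha : 0 < a)
    (hR : SingleRises (true :: R)) :
    ldr (X ++ (List.replicate a true ++ true :: R)) = X.count true + a := by
  rw [← List.append_assoc, ldr_append_true_cons (getLast?_append_replicate X true ha) hR,
    List.count_append, List.count_replicate_self]

end DyckPath

open DyckPath

/-- The hypotheses encode `Q = N^{n₀} B N^r E^s` with `N^r` the final maximal run of north steps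
of `Q`, so that `m = N^{r-1}` and `Q' = B N E^s`. -/
theorem stmt7_general (n : ℕ) (D P Q R : List Bool) (n0 : ℕ) (Q1 : List Bool)
    (rest : List (ℕ × List Bool)) (B : List Bool) (r s : ℕ)
    (hD : D ∈ dyckPaths n)
    (hsplit : D = P ++ Q ++ R)
    (hR : SingleRises R) (hRh : R = [] ∨ R.head? = some true)
    (hprime : IsPrimeDyck (Q ++ R))
    (hmax : ∀ P' Q' R' : List Bool, D = P' ++ Q' ++ R' → SingleRises R' →
      (R' = [] ∨ R'.head? = some true) → Q'.getLast? = some false →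
      IsPrimeDyck (Q' ++ R') → R'.length ≤ R.length)
    (hdecomp : Q = primeBlocks ((n0, Q1) :: rest))
    (hQ1 : IsPrimeDyck Q1) (hprimes : ∀ p ∈ rest, IsPrimeDyck p.2)
    (hn0 : 1 ≤ n0)
    (hcase : ∀ p ∈ rest, p.1 = 0)
    (hrun : Q = List.replicate n0 true ++
      (B ++ List.replicate r true ++ List.replicate s false))
    (hB : B.getLast? ≠ some true) (hr : 1 ≤ r) (hs : 1 ≤ s) :
    (P ++ List.replicate (r - 1) true ++
        (B ++ [true] ++ List.replicate s false) ++
        List.replicate n0 true ++ R) ∈ dyckPaths n ∧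
    returns (P ++ List.replicate (r - 1) true ++
        (B ++ [true] ++ List.replicate s false) ++
        List.replicate n0 true ++ R) = returns D + 1 ∧
    ldr (P ++ List.replicate (r - 1) true ++
        (B ++ [true] ++ List.replicate s false) ++
        List.replicate n0 true ++ R) = ldr D + 1 := by
  set M := List.replicate (r - 1) true ++ (B ++ [true] ++ List.replicate s false)
  rw [show P ++ List.replicate (r - 1) true ++ (B ++ [true] ++ List.replicate s false) ++
      List.replicate n0 true ++ R = P ++ M ++ (List.replicate n0 true ++ R) by simp [M]]
  have hDdyck : isDyck D = true := (List.mem_filter.1 (List.mem_toFinset.1 hD)).2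
  have hP : isDyck P = true := isDyck_of_append_left (by rwa [hsplit, List.append_assoc] at hDdyck)
    hprime.1
  have hC := isDyck_of_primeBlocks_eq_replicate_append hcase hQ1 hprimes (hdecomp ▸ hrun)
  have hrB := sub_one_pos_or_eq_nil_of_maximal hmax hsplit hR hprime hrun hB hr hs
  have hM : IsPrimeDyck M := isPrimeDyck_replicate_pred_append_true_append hC hr hrB
  have hZ : IsPrimeDyck (List.replicate n0 true ++ R) := isPrimeDyck_replicate_append hn0
    (by rw [hrun, List.count_append, List.count_append (l₁ := List.replicate n0 true),
      (isDyck_iff.1 hC).2, List.count_replicate_self, count_false_replicate_true]; omega) hprime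
  obtain ⟨R, rfl⟩ : ∃ R', R = true :: R' := List.head?_eq_some_iff.1 <| hRh.resolve_left
    fun h => absurd (by simpa [h] using (isDyck_iff.1 hZ.1).2 : n0 = 0) (by omega)
  have hPbal := (isDyck_iff.1 hP).2
  refine ⟨mem_dyckPaths_of_perm hD ?_ (isDyck_append (isDyck_append hP hM.1) hZ.1), ?_, ?_⟩
  · rw [hsplit, hrun, List.perm_iff_count]
    intro b
    cases b <;> simp only [M, List.append_assoc, List.cons_append, List.nil_append,
      List.count_append, List.count_replicate_self, List.count_cons_self, List.count_cons_of_ne,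
      ne_eq, Bool.true_eq_false, not_false_eq_true, count_false_replicate_true,
      count_true_replicate_false] <;> omega
  · rw [returns_append (isDyck_iff.1 (isDyck_append hP hM.1)).2, returns_append hPbal, hM.2.2,
      hZ.2.2, hsplit, List.append_assoc, returns_append hPbal, hprime.2.2]
  · rw [ldr_append_replicate_append_true_cons hn0 hR, hsplit, hrun,
      ldr_append_replicate_append_replicate hR hn0 hr hs hrB]
    simp only [M, List.append_assoc, List.cons_append, List.nil_append, List.count_append,
      List.count_replicate_self, List.count_cons_self, count_true_replicate_false]
    omega

/-- Case (2) of the map `φ`: if `n₁ = ⋯ = nₖ = ∅`, let `m` be the final maximal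
run of north steps of `Q` (after `n₀`) minus one step, and `Q'` the path `Q`
with `n₀` and `m` erased; then `φ(D) = P m Q' n₀ R` is a Dyck path of the same
semilength with one more return and `ldr` one larger.  Here
`Q = n₀ ++ B ++ Nʳ ++ Eˢ` with `B` not ending in a north step exhibits the
final run. -/
theorem stmt7 (n : ℕ) (D P Q R : List Bool) (n0 : ℕ) (Q1 : List Bool)
    (rest : List (ℕ × List Bool)) (B : List Bool) (r s : ℕ)
    (hD : D ∈ dyckPaths n) (h1 : ¬ EndsSingleEast D) (h2 : ldr D < n - 1)
    (hsplit : D = P ++ Q ++ R)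
    (hR : SingleRises R) (hRh : R = [] ∨ R.head? = some true)
    (hQl : Q.getLast? = some false)
    (hprime : IsPrimeDyck (Q ++ R))
    (hmax : ∀ P' Q' R' : List Bool, D = P' ++ Q' ++ R' → SingleRises R' →
      (R' = [] ∨ R'.head? = some true) → Q'.getLast? = some false →
      IsPrimeDyck (Q' ++ R') → R'.length ≤ R.length)
    (hdecomp : Q = primeBlocks ((n0, Q1) :: rest))
    (hQ1 : IsPrimeDyck Q1) (hprimes : ∀ p ∈ rest, IsPrimeDyck p.2)
    (hn0 : 1 ≤ n0)
    (hcase : ∀ p ∈ rest, p.1 = 0)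
    (hrun : Q = List.replicate n0 true ++
      (B ++ List.replicate r true ++ List.replicate s false))
    (hB : B.getLast? ≠ some true) (hr : 1 ≤ r) (hs : 1 ≤ s) :
    (P ++ List.replicate (r - 1) true ++
        (B ++ [true] ++ List.replicate s false) ++
        List.replicate n0 true ++ R) ∈ dyckPaths n ∧
    returns (P ++ List.replicate (r - 1) true ++
        (B ++ [true] ++ List.replicate s false) ++
        List.replicate n0 true ++ R) = returns D + 1 ∧
    ldr (P ++ List.replicate (r - 1) true ++
        (B ++ [true] ++ List.replicate s false) ++
        List.replicate n0 true ++ R) = ldr D + 1 :=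
  stmt7_general n D P Q R n0 Q1 rest B r s hD hsplit hR hRh hprime hmax hdecomp hQ1 hprimes hn0
    hcase hrun hB hr hs
end

section
/- In case (3) of the map φ, where n_1 = ∅ but some n_i with i ≥ 2 is nonempty: letting m be the final maximal run of north steps of Q minus one step, and Q' the path Q with n_0 and Q_1 erased, the path φ(D) = P Q_1 m Q' n_0 R is a Dyck path of the same semilength with returns(φ(D)) = returns(D) + 1 and ldr(φ(D)) = ldr(D) + 1. -/
/-!
Write `D = P n₀ Q₁ B Nʳ Eˢ R`, so that `φ(D) = P Q₁ (Nʳ⁻¹ B N Eˢ n₀) R` is a rearrangement of `D`.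
Maximality of `R` forces `r ≥ 2` (otherwise `N Eˢ R` would be a longer suffix of single rises),
and `ldr D < n - 1` forces `R ≠ []`. After `P Q₁` the path `φ(D)` climbs to height `r - 1 ≥ 1`;
`B` never drops below its starting height and `Eˢ` only comes down to `n₁ + ⋯ + n_k ≥ 1`, so the
path stays strictly above the diagonal until it enters `R` at the same height as in `D`. Its
returns are therefore those of `P`, `Q₁` and `R`: one more than the returns of `D`, which are
those of `P` and `Q R`. The last double rise of `D` ends the run `Nʳ`; that of `φ(D)` joins `n₀`
to the first step of `R`, one north step later.
-/

namespace Dyck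

def height (X : List Bool) : ℤ := X.count true - X.count false

/-- In `StaysNonneg c X` and `returnsFrom c X` the path `X` starts at height `c`. -/
def StaysNonneg (c : ℤ) (X : List Bool) : Prop := ∀ k, 0 ≤ c + height (X.take k)

def returnsFrom (c : ℤ) (X : List Bool) : ℕ :=
  ((List.range X.length).filter fun i =>
    (X[i]? == some false) && decide (c + height (X.take (i + 1)) = 0)).length

@[simp] lemma height_nil : height [] = 0 := rfl

@[simp] lemma height_append (X Y : List Bool) : height (X ++ Y) = height X + height Y := by
  simp only [height, List.count_append]; push_cast; ring

@[simp] lemma height_cons_true (X : List Bool) : height (true :: X) = 1 + height X := by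
  rw [← List.singleton_append, height_append]
  rfl

@[simp] lemma height_replicate_true (m : ℕ) : height (List.replicate m true) = m := by
  simp [height, List.count_replicate]

@[simp] lemma height_replicate_false (m : ℕ) : height (List.replicate m false) = -m := by
  simp [height, List.count_replicate]

lemma staysNonneg_append_iff {c : ℤ} {X Y : List Bool} :
    StaysNonneg c (X ++ Y) ↔ StaysNonneg c X ∧ StaysNonneg (c + height X) Y := by
  refine ⟨fun h => ⟨fun k => ?_, fun k => ?_⟩, fun ⟨hX, hY⟩ k => ?_⟩
  · rcases le_or_gt k X.length with hk | hk
    · simpa [List.take_append, Nat.sub_eq_zero_of_le hk] using h k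
    · simpa [List.take_of_length_le hk.le] using h X.length
  · simpa [List.take_append, List.take_of_length_le, add_assoc] using h (X.length + k)
  · rcases le_or_gt k X.length with hk | hk
    · simpa [List.take_append, Nat.sub_eq_zero_of_le hk] using hX k
    · simpa [List.take_append, List.take_of_length_le hk.le, add_assoc] using hY (k - X.length)

lemma StaysNonneg.mono {c c' : ℤ} {X : List Bool} (hX : StaysNonneg c X) (h : c ≤ c') :
    StaysNonneg c' X :=
  fun k => (hX k).trans (by linarith)

lemma staysNonneg_replicate_true {c : ℤ} (hc : 0 ≤ c) (m : ℕ) :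
    StaysNonneg c (List.replicate m true) := by
  intro k
  rw [List.take_replicate, height_replicate_true]
  positivity

lemma staysNonneg_replicate_false {c : ℤ} {m : ℕ} (hm : (m : ℤ) ≤ c) :
    StaysNonneg c (List.replicate m false) := by
  intro k
  rw [List.take_replicate, height_replicate_false]
  have : ((min k m : ℕ) : ℤ) ≤ m := by exact_mod_cast min_le_right k m
  linarith

lemma isDyck_iff {X : List Bool} : isDyck X = true ↔ StaysNonneg 0 X ∧ height X = 0 := by
  simp only [isDyck, Bool.and_eq_true, List.all_eq_true, List.mem_range, decide_eq_true_eq,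
    beq_iff_eq, StaysNonneg, height, zero_add, sub_nonneg, sub_eq_zero, Nat.cast_le,
    Nat.cast_inj]
  refine ⟨fun ⟨h, he⟩ => ⟨fun k => ?_, he⟩, fun ⟨h, he⟩ => ⟨fun k _ => h k, he⟩⟩
  rcases le_or_gt k X.length with hk | hk
  · exact h k (Nat.lt_succ_of_le hk)
  · rw [List.take_of_length_le hk.le]; exact he.ge

lemma isDyck_append {X Y : List Bool} (hX : isDyck X = true) (hY : isDyck Y = true) :
    isDyck (X ++ Y) = true := by
  rw [isDyck_iff] at *
  refine ⟨staysNonneg_append_iff.2 ⟨hX.1, ?_⟩, by simp [hX.2, hY.2]⟩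
  simpa [hX.2] using hY.1

lemma isDyck_of_isDyck_append {X Y : List Bool} (h : isDyck (X ++ Y) = true)
    (hY : isDyck Y = true) : isDyck X = true := by
  rw [isDyck_iff] at *
  simp only [staysNonneg_append_iff, height_append, hY.2, add_zero] at h
  exact ⟨h.1.1, h.2⟩

lemma mem_dyckPaths_iff {n : ℕ} {D : List Bool} :
    D ∈ dyckPaths n ↔ isDyck D = true ∧ D.count true = n := by
  have hbal : isDyck D = true → D.count true = D.count false := fun h => by
    simp only [isDyck, Bool.and_eq_true, beq_iff_eq] at h
    exact h.2
  simp only [dyckPaths, List.mem_toFinset, List.mem_filter, List.mem_permutations,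
    List.perm_iff_count]
  refine ⟨fun ⟨hc, hD⟩ => ⟨hD, by simpa [List.count_replicate] using hc true⟩,
    fun ⟨hD, hn⟩ => ⟨fun b => ?_, hD⟩⟩
  cases b <;> simp [List.count_replicate, ← hn, hbal hD]

lemma returns_eq_returnsFrom (X : List Bool) : returns X = returnsFrom 0 X := by
  unfold returns returnsFrom
  congr 1
  refine List.filter_congr fun i _ => ?_
  simp only [height, zero_add, sub_eq_zero, Nat.cast_inj]
  rfl

lemma returnsFrom_append (c : ℤ) (X Y : List Bool) :
    returnsFrom c (X ++ Y) = returnsFrom c X + returnsFrom (c + height X) Y := by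
  unfold returnsFrom
  rw [List.length_append, List.range_add, List.filter_append, List.length_append,
    List.filter_map, List.length_map]
  congr 2
  · refine List.filter_congr fun i hi => ?_
    rw [List.mem_range] at hi
    rw [List.getElem?_append_left hi, List.take_append, Nat.sub_eq_zero_of_le (by omega)]
    simp
  · refine List.filter_congr fun j _ => ?_
    rw [Function.comp_apply, List.getElem?_append_right (by omega), Nat.add_sub_cancel_left,
      add_assoc, List.take_append, List.take_of_length_le (by omega), Nat.add_sub_cancel_left,
      height_append, add_assoc]

lemma returnsFrom_eq_zero {c : ℤ} {X : List Bool} (hX : StaysNonneg (c - 1) X) :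
    returnsFrom c X = 0 := by
  simp only [returnsFrom, List.length_eq_zero_iff, List.filter_eq_nil_iff, Bool.and_eq_true,
    decide_eq_true_eq, not_and]
  intro i _ _ h0
  have := hX (i + 1)
  omega

lemma getLast?_eq_some_false {c : ℤ} {X : List Bool} (hX : StaysNonneg c X)
    (h0 : c + height X = 0) (hne : X ≠ []) : X.getLast? = some false := by
  obtain ⟨Y, b, rfl⟩ := (List.eq_nil_or_concat X).resolve_left hne
  cases b
  · simp
  · have := hX Y.length
    simp only [List.concat_eq_append, List.take_left', height_append, height_cons_true,
      height_nil] at this h0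
    omega

lemma getLast?_of_isPrimeDyck {X : List Bool} (h : IsPrimeDyck X) : X.getLast? = some false := by
  obtain ⟨hnn, hh⟩ := isDyck_iff.1 h.1
  exact getLast?_eq_some_false hnn (by rw [hh, zero_add]) h.2.1

lemma getLast?_append_eq_some_false {X Y : List Bool} (hX : X.getLast? = some false)
    (hY : Y.getLast? ≠ some true) : (X ++ Y).getLast? = some false := by
  rw [List.getLast?_append]
  rcases h : Y.getLast? with _ | _ | _
  · simpa using hX
  · rfl
  · exact absurd h hY

lemma returnsFrom_pos {c : ℤ} {X : List Bool} (hX : StaysNonneg c X)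
    (h0 : c + height X = 0) (hne : X ≠ []) : 0 < returnsFrom c X := by
  have hlen : 0 < X.length := List.length_pos_iff.2 hne
  have hlast : X[X.length - 1]? = some false := by
    rw [← List.getLast?_eq_getElem?]; exact getLast?_eq_some_false hX h0 hne
  refine List.length_pos_iff.2 (List.ne_nil_of_mem (a := X.length - 1) ?_)
  simp only [List.mem_filter, List.mem_range, hlast, Nat.sub_add_cancel hlen, List.take_length,
    h0]
  simp [hlen]

lemma returns_append {X : List Bool} (hX : isDyck X = true) (Y : List Bool) :
    returns (X ++ Y) = returns X + returns Y := by
  simp [returns_eq_returnsFrom, returnsFrom_append, (isDyck_iff.1 hX).2]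

lemma primeBlocks_cons (p : ℕ × List Bool) (l : List (ℕ × List Bool)) :
    primeBlocks (p :: l) = List.replicate p.1 true ++ p.2 ++ primeBlocks l := by
  simp [primeBlocks]

lemma staysNonneg_primeBlocks {l : List (ℕ × List Bool)} (h : ∀ p ∈ l, isDyck p.2 = true) :
    StaysNonneg 0 (primeBlocks l) := by
  induction l with
  | nil => simp [primeBlocks, StaysNonneg]
  | cons p l ih =>
    obtain ⟨hp, hph⟩ := isDyck_iff.1 (h p List.mem_cons_self)
    rw [primeBlocks_cons, staysNonneg_append_iff, staysNonneg_append_iff]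
    refine ⟨⟨staysNonneg_replicate_true le_rfl _, hp.mono (by simp)⟩,
      (ih fun q hq => h q (List.mem_cons_of_mem p hq)).mono (by simp [hph])⟩

lemma height_primeBlocks {l : List (ℕ × List Bool)} (h : ∀ p ∈ l, isDyck p.2 = true) :
    height (primeBlocks l) = ↑(l.map Prod.fst).sum := by
  induction l with
  | nil => simp [primeBlocks]
  | cons p l ih =>
    rw [primeBlocks_cons, height_append, height_append,
      ih fun q hq => h q (List.mem_cons_of_mem p hq), (isDyck_iff.1 (h p List.mem_cons_self)).2]
    simp

lemma singleRises_cons_iff {b : Bool} {X : List Bool} :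
    SingleRises (b :: X) ↔ (b = true → X.head? ≠ some true) ∧ SingleRises X := by
  refine ⟨fun h => ⟨fun hb hX => h 0 ?_, fun i => h (i + 1)⟩, fun ⟨hb, hX⟩ i => ?_⟩
  · simpa [hb, List.head?_eq_getElem?] using hX
  · cases i with
    | zero => simpa [List.head?_eq_getElem?] using hb
    | succ i => exact hX i

lemma singleRises_true_replicate_false_append {s : ℕ} (hs : 1 ≤ s) {R : List Bool}
    (hR : SingleRises R) : SingleRises (true :: (List.replicate s false ++ R)) := by
  obtain ⟨s, rfl⟩ := Nat.exists_eq_add_of_le' hs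
  have hfalse : SingleRises (List.replicate s false ++ R) := by
    induction s with
    | zero => exact hR
    | succ s ih => simpa [List.replicate_succ, singleRises_cons_iff] using ih
  simpa [List.replicate_succ, singleRises_cons_iff] using hfalse

lemma ldr_append {X Z : List Bool} (hX : X.getLast? = some true) (hZ : Z.head? = some true)
    (hZs : SingleRises Z) : ldr (X ++ Z) = X.count true := by
  obtain ⟨X, rfl⟩ := List.getLast?_eq_some_iff.1 hX
  have hZ0 : Z[0]? = some true := by rwa [← List.head?_eq_getElem?]
  have hlen : (X ++ [true] ++ Z).length = X.length + 1 + Z.length := by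
    simp only [List.length_append, List.length_cons, List.length_nil]
  have hjunction : [X.length].filter (fun i => ((X ++ [true] ++ Z)[i]? == some true) &&
      ((X ++ [true] ++ Z)[i + 1]? == some true)) = [X.length] := by
    simp [List.getElem?_append_right, hZ0]
  have hinZ : (List.map (fun j => X.length + 1 + j) (List.range Z.length)).filter
      (fun i => ((X ++ [true] ++ Z)[i]? == some true) &&
        ((X ++ [true] ++ Z)[i + 1]? == some true)) = [] := by
    simp only [List.filter_eq_nil_iff, List.mem_map, List.mem_range]
    rintro _ ⟨j, -, rfl⟩
    simpa [List.getElem?_append_right, add_assoc, add_comm 1] using hZs j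
  unfold ldr
  rw [hlen, List.range_add, List.range_succ, List.filter_append, List.filter_append, hjunction,
    hinZ, List.append_nil, List.getLast?_concat]
  simp [List.take_append, List.take_of_length_le]

lemma staysNonneg_height_of_primeBlocks_eq {rest : List (ℕ × List Bool)} {B : List Bool}
    {r s : ℕ}
    (hprimes : ∀ p ∈ rest, IsPrimeDyck p.2) (hcase : ∃ p ∈ rest.tail, p.1 ≠ 0)
    (hrun : primeBlocks rest = B ++ List.replicate r true ++ List.replicate s false) :
    StaysNonneg 0 B ∧ height B + r = (rest.map Prod.fst).sum + s ∧
      1 ≤ (rest.map Prod.fst).sum := by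
  have hdyck : ∀ p ∈ rest, isDyck p.2 = true := fun p hp => (hprimes p hp).1
  have hnn := staysNonneg_primeBlocks hdyck
  have hh := height_primeBlocks hdyck
  rw [hrun, List.append_assoc, staysNonneg_append_iff] at hnn
  rw [hrun, height_append, height_append, height_replicate_true, height_replicate_false] at hh
  obtain ⟨p, hp, hp0⟩ := hcase
  refine ⟨hnn.1, by omega, ?_⟩
  exact (Nat.one_le_iff_ne_zero.2 hp0).trans
    (List.le_sum_of_mem (List.mem_map_of_mem (List.mem_of_mem_tail hp)))

lemma ldr_append_replicate_append {X R : List Bool} {r s : ℕ} (hr : 2 ≤ r) (hs : 1 ≤ s)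
    (hR : SingleRises R) :
    ldr (X ++ List.replicate r true ++ List.replicate s false ++ R) = X.count true + (r - 1) := by
  have hsplit : X ++ List.replicate r true ++ List.replicate s false ++ R =
      (X ++ List.replicate (r - 1) true) ++ (true :: (List.replicate s false ++ R)) := by
    conv_lhs => rw [show r = r - 1 + 1 by omega, List.replicate_succ']
    simp
  rw [hsplit, ldr_append
    (by rw [List.getLast?_append, List.getLast?_replicate, if_neg (by omega)]; rfl) rfl
    (singleRises_true_replicate_false_append hs hR)]
  simp

lemma isPrimeDyck_tail {Q Q1 B R : List Bool} {n0 r s σ : ℕ}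
    (hQ : Q = List.replicate n0 true ++ Q1 ++ (B ++ List.replicate r true ++
      List.replicate s false))
    (hQ1 : isDyck Q1 = true) (hB : StaysNonneg 0 B) (hBh : height B + r = σ + s)
    (hr : 2 ≤ r) (hs : 1 ≤ s) (hσ : 1 ≤ σ) (hQR : IsPrimeDyck (Q ++ R)) (hR : R ≠ []) :
    IsPrimeDyck (List.replicate (r - 1) true ++ (B ++ [true] ++ List.replicate s false) ++
      List.replicate n0 true ++ R) := by
  replace hQ : height Q = n0 + σ := by
    simp only [hQ, height_append, height_replicate_true, height_replicate_false,
      (isDyck_iff.1 hQ1).2]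
    omega
  obtain ⟨hQRdyck, -, hQRret⟩ := hQR
  obtain ⟨hQRnn, hQRh⟩ := isDyck_iff.1 hQRdyck
  rw [height_append, hQ] at hQRh
  rw [staysNonneg_append_iff, zero_add, hQ] at hQRnn
  rw [returns_eq_returnsFrom, returnsFrom_append, zero_add, hQ] at hQRret
  have hRret : returnsFrom (n0 + σ) R = 1 := by
    have := returnsFrom_pos hQRnn.2 hQRh hR
    omega
  set M := List.replicate (r - 2) true ++ (B ++ [true] ++ List.replicate s false) ++
    List.replicate n0 true
  have hsplit : List.replicate (r - 1) true ++ (B ++ [true] ++ List.replicate s false) ++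
      List.replicate n0 true ++ R = [true] ++ M ++ R := by
    rw [show r - 1 = r - 2 + 1 by omega, List.replicate_succ]
    simp [M]
  have hMh : 1 + height M = n0 + σ := by
    simp only [M, height_append, height_replicate_true, height_replicate_false,
      height_cons_true, height_nil]
    push_cast [Nat.cast_sub (show 2 ≤ r from hr)]
    omega
  -- after its first step the tail stays strictly above the diagonal until `R` starts
  have hMpos : StaysNonneg 0 M := by
    simp only [M, staysNonneg_append_iff, height_append, height_replicate_true,
      height_replicate_false, height_cons_true, height_nil]
    refine ⟨⟨staysNonneg_replicate_true le_rfl _, ⟨hB.mono (by positivity),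
      staysNonneg_replicate_true ?_ 1⟩, staysNonneg_replicate_false ?_⟩,
      staysNonneg_replicate_true ?_ _⟩
    all_goals push_cast [Nat.cast_sub hr]; omega
  rw [hsplit]
  refine ⟨isDyck_iff.2 ⟨?_, ?_⟩, by simp, ?_⟩
  · simp only [staysNonneg_append_iff]
    refine ⟨⟨staysNonneg_replicate_true le_rfl 1, hMpos.mono (by simp)⟩, ?_⟩
    simpa [← add_assoc, hMh] using hQRnn.2
  · simp only [height_append, height_cons_true, height_nil]
    omega
  · rw [returns_eq_returnsFrom, returnsFrom_append, returnsFrom_append,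
      returnsFrom_eq_zero (hMpos.mono (by simp))]
    simp only [height_append, height_cons_true, height_nil, zero_add, add_zero, hMh, hRret]
    rfl

/-- With a single north step before the final east run, that step would start a longer suffix
of single rises. -/
lemma two_le_of_maximal {D P Q R Q1 B : List Bool} {n0 r s : ℕ}
    (hmax : ∀ P' Q' R' : List Bool, D = P' ++ Q' ++ R' → SingleRises R' →
      (R' = [] ∨ R'.head? = some true) → Q'.getLast? = some false →
      IsPrimeDyck (Q' ++ R') → R'.length ≤ R.length)
    (hD : D = P ++ Q ++ R)
    (hQ : Q = List.replicate n0 true ++ Q1 ++ (B ++ List.replicate r true ++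
      List.replicate s false))
    (hprime : IsPrimeDyck (Q ++ R)) (hR : SingleRises R) (hQ1 : IsPrimeDyck Q1)
    (hB : B.getLast? ≠ some true) (hr : 1 ≤ r) (hs : 1 ≤ s) : 2 ≤ r := by
  by_contra! hr1
  obtain rfl : r = 1 := by omega
  have := hmax P (List.replicate n0 true ++ Q1 ++ B) (true :: (List.replicate s false ++ R))
    (by simp [hD, hQ]) (singleRises_true_replicate_false_append hs hR) (Or.inr rfl)
    (getLast?_append_eq_some_false (by simp [getLast?_of_isPrimeDyck hQ1]) hB)
    (by convert hprime using 1; simp [hQ])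
  simp at this

lemma ne_nil_of_ldr_lt {D X R : List Bool} {n r s : ℕ}
    (hD : D = X ++ List.replicate r true ++ List.replicate s false ++ R)
    (hr : 2 ≤ r) (hs : 1 ≤ s) (hR : SingleRises R) (hn : D.count true = n)
    (hldr : ldr D < n - 1) : R ≠ [] := by
  rintro rfl
  rw [hD, ldr_append_replicate_append hr hs hR] at hldr
  rw [hD] at hn
  simp only [List.append_nil, List.count_append, List.count_replicate_self, List.count_replicate,
    beq_true, Bool.false_eq_true, ↓reduceIte] at hn
  omega

end Dyck

theorem stmt8_general (n : ℕ) (D P Q R : List Bool) (n0 : ℕ) (Q1 : List Bool)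
    (rest : List (ℕ × List Bool)) (B : List Bool) (r s : ℕ)
    (hD : D ∈ dyckPaths n) (h2 : ldr D < n - 1)
    (hsplit : D = P ++ Q ++ R)
    (hR : SingleRises R) (hRh : R = [] ∨ R.head? = some true)
    (hprime : IsPrimeDyck (Q ++ R))
    (hmax : ∀ P' Q' R' : List Bool, D = P' ++ Q' ++ R' → SingleRises R' →
      (R' = [] ∨ R'.head? = some true) → Q'.getLast? = some false →
      IsPrimeDyck (Q' ++ R') → R'.length ≤ R.length)
    (hdecomp : Q = primeBlocks ((n0, Q1) :: rest))
    (hQ1 : IsPrimeDyck Q1) (hprimes : ∀ p ∈ rest, IsPrimeDyck p.2)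
    (hn0 : 1 ≤ n0)
    (hcase : rest ≠ [] ∧ (rest.headI).1 = 0 ∧ ∃ p ∈ rest.tail, p.1 ≠ 0)
    (hrun : primeBlocks rest =
      B ++ List.replicate r true ++ List.replicate s false)
    (hB : B.getLast? ≠ some true) (hr : 1 ≤ r) (hs : 1 ≤ s) :
    (P ++ Q1 ++ List.replicate (r - 1) true ++
        (B ++ [true] ++ List.replicate s false) ++
        List.replicate n0 true ++ R) ∈ dyckPaths n ∧
    returns (P ++ Q1 ++ List.replicate (r - 1) true ++
        (B ++ [true] ++ List.replicate s false) ++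
        List.replicate n0 true ++ R) = returns D + 1 ∧
    ldr (P ++ Q1 ++ List.replicate (r - 1) true ++
        (B ++ [true] ++ List.replicate s false) ++
        List.replicate n0 true ++ R) = ldr D + 1 := by
  open Dyck in
  obtain ⟨hDdyck, hDn⟩ := mem_dyckPaths_iff.1 hD
  obtain ⟨hBnn, hBh, hσ⟩ := staysNonneg_height_of_primeBlocks_eq hprimes hcase.2.2 hrun
  have hQ : Q = List.replicate n0 true ++ Q1 ++ (B ++ List.replicate r true ++
      List.replicate s false) := by rw [hdecomp, primeBlocks_cons, hrun]
  have hD' : D = P ++ List.replicate n0 true ++ Q1 ++ B ++ List.replicate r true ++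
      List.replicate s false ++ R := by simp [hsplit, hQ]
  have hr2 := two_le_of_maximal hmax hsplit hQ hprime hR hQ1 hB hr hs
  have hRne := ne_nil_of_ldr_lt hD' hr2 hs hR hDn h2
  have hPdyck : isDyck P = true :=
    isDyck_of_isDyck_append (by rwa [← List.append_assoc, ← hsplit]) hprime.1
  have hPQ1 := isDyck_append hPdyck hQ1.1
  have htail := isPrimeDyck_tail hQ hQ1.1 hBnn hBh hr2 hs hσ hprime hRne
  have hφ : P ++ Q1 ++ List.replicate (r - 1) true ++ (B ++ [true] ++ List.replicate s false) ++
      List.replicate n0 true ++ R = P ++ Q1 ++ (List.replicate (r - 1) true ++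
      (B ++ [true] ++ List.replicate s false) ++ List.replicate n0 true ++ R) := by
    simp
  refine ⟨mem_dyckPaths_iff.2 ⟨?_, ?_⟩, ?_, ?_⟩
  · rw [hφ]
    exact isDyck_append hPQ1 htail.1
  · rw [← hDn, hD']
    simp only [List.count_append, List.count_replicate, List.count_singleton, beq_self_eq_true,
      Bool.false_eq_true, ↓reduceIte, beq_true]
    omega
  · rw [hφ, returns_append hPQ1, returns_append hPdyck, hQ1.2.2, htail.2.2, hsplit,
      List.append_assoc, returns_append hPdyck, hprime.2.2]
  · rw [hD', ldr_append_replicate_append hr2 hs hR, ldr_append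
      (by rw [List.getLast?_append, List.getLast?_replicate, if_neg (by omega)]; rfl)
      (hRh.resolve_left hRne) hR]
    simp only [List.count_append, List.count_replicate, List.count_singleton, beq_self_eq_true,
      Bool.false_eq_true, ↓reduceIte, beq_true]
    omega

/-- Case (3) of the map `φ`: if `n₁ = ∅` but some `nᵢ` with `i ≥ 2` is
nonempty, let `m` be the final maximal run of north steps of `Q` minus one
step, and `Q'` the path `Q` with `n₀`, `Q₁` and `m` erased; then
`φ(D) = P Q₁ m Q' n₀ R` is a Dyck path of the same semilength with one more
return and `ldr` one larger.  Here `primeBlocks rest = B ++ Nʳ ++ Eˢ` with `B`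
not ending in a north step exhibits the final run of `Q`. -/
theorem stmt8 (n : ℕ) (D P Q R : List Bool) (n0 : ℕ) (Q1 : List Bool)
    (rest : List (ℕ × List Bool)) (B : List Bool) (r s : ℕ)
    (hD : D ∈ dyckPaths n) (h1 : ¬ EndsSingleEast D) (h2 : ldr D < n - 1)
    (hsplit : D = P ++ Q ++ R)
    (hR : SingleRises R) (hRh : R = [] ∨ R.head? = some true)
    (hQl : Q.getLast? = some false)
    (hprime : IsPrimeDyck (Q ++ R))
    (hmax : ∀ P' Q' R' : List Bool, D = P' ++ Q' ++ R' → SingleRises R' →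
      (R' = [] ∨ R'.head? = some true) → Q'.getLast? = some false →
      IsPrimeDyck (Q' ++ R') → R'.length ≤ R.length)
    (hdecomp : Q = primeBlocks ((n0, Q1) :: rest))
    (hQ1 : IsPrimeDyck Q1) (hprimes : ∀ p ∈ rest, IsPrimeDyck p.2)
    (hn0 : 1 ≤ n0)
    (hcase : rest ≠ [] ∧ (rest.headI).1 = 0 ∧ ∃ p ∈ rest.tail, p.1 ≠ 0)
    (hrun : primeBlocks rest =
      B ++ List.replicate r true ++ List.replicate s false)
    (hB : B.getLast? ≠ some true) (hr : 1 ≤ r) (hs : 1 ≤ s) :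
    (P ++ Q1 ++ List.replicate (r - 1) true ++
        (B ++ [true] ++ List.replicate s false) ++
        List.replicate n0 true ++ R) ∈ dyckPaths n ∧
    returns (P ++ Q1 ++ List.replicate (r - 1) true ++
        (B ++ [true] ++ List.replicate s false) ++
        List.replicate n0 true ++ R) = returns D + 1 ∧
    ldr (P ++ Q1 ++ List.replicate (r - 1) true ++
        (B ++ [true] ++ List.replicate s false) ++
        List.replicate n0 true ++ R) = ldr D + 1 :=
  stmt8_general n D P Q R n0 Q1 rest B r s hD h2 hsplit hR hRh hprime hmax hdecomp hQ1 hprimes hn0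
    hcase hrun hB hr hs
end
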